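/- arXiv:2301.12784 — 2 statements merged into one kernel-verified Lean document; each statement's English description precedes it below -/
import Mathlib

section
/- For every integer n ≥ 5, the direct product K₂ × K_n is super edge-connected; that is, every minimum edge-cut of K₂ × K_n consists of the edges incident with a single vertex (equivalently, removing any edge-cut of minimum cardinality isolates a vertex). -/
open SimpleGraph

/-- The direct (tensor/Kronecker) product of two simple graphs:
`(u₁, v₁)` and `(u₂, v₂)` are adjacent iff `u₁u₂ ∈ E(G)` and `v₁v₂ ∈ E(H)`. -/
def tensorProd {α β : Type*} (G : SimpleGraph α) (H : SimpleGraph β) :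
    SimpleGraph (α × β) where
  Adj x y := G.Adj x.1 y.1 ∧ H.Adj x.2 y.2
  symm := ⟨fun _ _ h => ⟨h.1.symm, h.2.symm⟩⟩
  loopless := ⟨fun _ h => G.loopless.irrefl _ h.1⟩

/-- The direct product `G × Tₙ` of a simple graph `G` with the total graph `Tₙ`
(the complete graph `Kₙ` with a loop added at every vertex):  since `Tₙ` has all
possible edges and loops, `(u₁, v₁)` is adjacent to `(u₂, v₂)` iff `u₁u₂ ∈ E(G)`. -/
def totalProd {α : Type*} (G : SimpleGraph α) (n : ℕ) :
    SimpleGraph (α × Fin n) where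
  Adj x y := G.Adj x.1 y.1
  symm := ⟨fun _ _ h => h.symm⟩
  loopless := ⟨fun _ h => G.loopless.irrefl _ h⟩

/-- The direct product `K₂ × Kₙ`. -/
def K2timesKn (n : ℕ) : SimpleGraph (Fin 2 × Fin n) :=
  tensorProd (completeGraph (Fin 2)) (completeGraph (Fin n))

/-- The direct product `K₂ × Tₙ` (isomorphic to the complete bipartite graph `K_{n,n}`). -/
def K2timesTn (n : ℕ) : SimpleGraph (Fin 2 × Fin n) :=
  totalProd (completeGraph (Fin 2)) n

/-- `[A, V ∖ A]` : the set of edges of `G` with exactly one endpoint in `A`. -/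
def cutEdges {α : Type*} (G : SimpleGraph α) (A : Set α) : Set (Sym2 α) :=
  {e | e ∈ G.edgeSet ∧ ∃ u v, e = s(u, v) ∧ u ∈ A ∧ v ∉ A}

/-- `F` is an edge-cut of `G`: a set of edges whose deletion disconnects `G`. -/
def IsEdgeCut {α : Type*} (G : SimpleGraph α) (F : Set (Sym2 α)) : Prop :=
  F ⊆ G.edgeSet ∧ ¬ (G.deleteEdges F).Connected

/-- The edge-connectivity `λ(G)`: the minimum cardinality of an edge-cut. -/
noncomputable def edgeConn {α : Type*} (G : SimpleGraph α) : ℕ :=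
  sInf {k | ∃ F : Finset (Sym2 α), IsEdgeCut G ↑F ∧ F.card = k}

/-- `G` is super edge-connected (super-λ): every minimum edge-cut is exactly the
set of edges incident with some vertex. -/
def SuperEdgeConnected {α : Type*} (G : SimpleGraph α) : Prop :=
  ∀ F : Finset (Sym2 α), IsEdgeCut G ↑F → F.card = edgeConn G →
    ∃ v, (F : Set (Sym2 α)) = G.incidenceSet v

/-- `F` is a restricted edge-cut of `G`: its deletion disconnects `G` and every
connected component of `G − F` has at least two vertices. -/
def IsRestrictedEdgeCut {α : Type*} (G : SimpleGraph α) (F : Set (Sym2 α)) : Prop :=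
  F ⊆ G.edgeSet ∧ ¬ (G.deleteEdges F).Connected ∧
    ∀ c : (G.deleteEdges F).ConnectedComponent, c.supp.Nontrivial

/-- The restricted edge-connectivity `λ'(G) : ℕ∞`: the minimum cardinality of a
restricted edge-cut, and `+∞` (`⊤`) if no restricted edge-cut exists. -/
noncomputable def restrictedEdgeConn {α : Type*} (G : SimpleGraph α) : ℕ∞ :=
  sInf {k : ℕ∞ | ∃ F : Finset (Sym2 α), IsRestrictedEdgeCut G ↑F ∧ (F.card : ℕ∞) = k}

/-- `G` is super restricted edge-connected (super-λ'): every minimum restricted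
edge-cut isolates an edge, i.e. some component of `G − F` is a single edge. -/
def SuperRestrictedEdgeConnected {α : Type*} (G : SimpleGraph α) : Prop :=
  ∀ F : Finset (Sym2 α), IsRestrictedEdgeCut G ↑F →
    (F.card : ℕ∞) = restrictedEdgeConn G →
    ∃ u v, (G.deleteEdges ↑F).Adj u v ∧
      ((G.deleteEdges ↑F).connectedComponentMk u).supp = {u, v}

/-- The minimum edge-degree `ξ(G) = min { d(u) + d(v) − 2 : uv ∈ E(G) }`. -/
noncomputable def minEdgeDegree {α : Type*} (G : SimpleGraph α) : ℕ :=
  sInf {k | ∃ u v, G.Adj u v ∧ (G.neighborSet u).ncard + (G.neighborSet v).ncard - 2 = k}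


/-!
`K₂ × Kₙ` is `K_{n,n}` minus a perfect matching, hence `(n - 1)`-regular. An edge-cut contains
every edge leaving some vertex set `A`, and since these are also the edges leaving `Aᶜ` we may
take `1 ≤ |A| ≤ n`. A vertex of `A` has neighbours in `A` only on the other side of the
bipartition, so if `A` meets the two sides in `a` and `b` vertices, at least
`(n - 1)|A| - 2ab ≥ (n - 1)|A| - |A|² / 2` edges leave `A`. For `n ≥ 4` this is at least `n - 1`,
and at least `n` once `|A| ≥ 2`. Hence `λ = n - 1`, and a minimum cut has `|A| = 1`: it is the set
of edges at a single vertex.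
-/

namespace SimpleGraph

open Finset

variable {α : Type*} (G : SimpleGraph α)

lemma cutEdges_compl (A : Set α) : cutEdges G Aᶜ = cutEdges G A := by
  ext e
  constructor
  · rintro ⟨he, u, v, rfl, hu, hv⟩
    exact ⟨he, v, u, Sym2.eq_swap, not_not.1 hv, hu⟩
  · rintro ⟨he, u, v, rfl, hu, hv⟩
    exact ⟨he, v, u, Sym2.eq_swap, hv, not_not.2 hu⟩

lemma cutEdges_singleton (v : α) : cutEdges G {v} = G.incidenceSet v := by
  ext e
  constructor
  · rintro ⟨he, u, w, rfl, rfl, -⟩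
    exact ⟨he, Sym2.mem_mk_left u w⟩
  · rintro ⟨he, hv⟩
    obtain ⟨w, rfl⟩ := Sym2.mem_iff_exists.1 hv
    exact ⟨he, v, w, rfl, rfl, fun hw => G.ne_of_adj he hw.symm⟩

lemma exists_cutEdges_subset_of_isEdgeCut [Nonempty α] {F : Set (Sym2 α)}
    (hF : IsEdgeCut G F) : ∃ A : Set α, A.Nonempty ∧ Aᶜ.Nonempty ∧ cutEdges G A ⊆ F := by
  obtain ⟨-, hdisc⟩ := hF
  have hpre : ¬ (G.deleteEdges F).Preconnected := fun h => hdisc ⟨h⟩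
  obtain ⟨u, w, huw⟩ : ∃ u w, ¬ (G.deleteEdges F).Reachable u w := by
    simpa [Preconnected] using hpre
  refine ⟨{x | (G.deleteEdges F).Reachable u x}, ⟨u, .refl u⟩, ⟨w, huw⟩, ?_⟩
  rintro _ ⟨he, x, y, rfl, hx, hy⟩
  by_contra hxy
  exact hy (hx.trans (Adj.reachable ((deleteEdges_adj ..).2 ⟨he, hxy⟩)))

lemma isEdgeCut_incidenceSet [Nontrivial α] (v : α) : IsEdgeCut G (G.incidenceSet v) := by
  refine ⟨G.incidenceSet_subset v, fun h => h.preconnected.not_isIsolated v fun w hw => ?_⟩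
  rw [deleteEdges_adj] at hw
  exact hw.2 ((G.mem_incidenceSet v w).2 hw.1)

variable [Fintype α] [DecidableEq α] [DecidableRel G.Adj]

lemma edgeConn_le_degree [Nontrivial α] (v : α) : edgeConn G ≤ G.degree v :=
  Nat.sInf_le ⟨G.incidenceFinset v, by simpa using G.isEdgeCut_incidenceSet v,
    G.card_incidenceFinset_eq_degree v⟩

lemma le_edgeConn [Nontrivial α] {k : ℕ} (h : ∀ F : Finset (Sym2 α), IsEdgeCut G F → k ≤ #F) :
    k ≤ edgeConn G := by
  obtain ⟨v⟩ : Nonempty α := inferInstance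
  refine le_csInf ⟨_, G.incidenceFinset v, by simpa using G.isEdgeCut_incidenceSet v, rfl⟩ ?_
  rintro _ ⟨F, hF, rfl⟩
  exact h F hF

lemma coe_eq_incidenceSet_of_subset {F : Finset (Sym2 α)} {v : α}
    (hsub : G.incidenceSet v ⊆ F) (hcard : #F ≤ G.degree v) :
    (F : Set (Sym2 α)) = G.incidenceSet v := by
  have hsub' : G.incidenceFinset v ⊆ F := by rwa [← coe_subset, coe_incidenceFinset]
  rw [← eq_of_subset_of_card_le hsub' (by rwa [card_incidenceFinset_eq_degree]),
    coe_incidenceFinset]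

lemma sum_card_neighborFinset_sdiff_le {A : Finset α} {F : Finset (Sym2 α)}
    (hF : cutEdges G A ⊆ F) : ∑ x ∈ A, #(G.neighborFinset x \ A) ≤ #F := by
  rw [← card_sigma]
  refine card_le_card_of_injOn (fun p => s(p.1, p.2)) (fun p hp => ?_) ?_
  · simp only [mem_coe, mem_sigma, mem_sdiff, mem_neighborFinset] at hp
    exact hF ⟨hp.2.1, p.1, p.2, rfl, hp.1, hp.2.2⟩
  · rintro ⟨x, y⟩ hxy ⟨x', y'⟩ hxy' h
    simp only [mem_coe, mem_sigma, mem_sdiff] at hxy hxy'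
    rcases Sym2.eq_iff.1 h with ⟨rfl, rfl⟩ | ⟨rfl, rfl⟩
    · rfl
    · exact absurd hxy.1 hxy'.2.2

end SimpleGraph

open Finset in
lemma Finset.card_mul_sum_card_filter_fst_ne_add_sq_le {ι κ : Type*} [Fintype ι] [DecidableEq ι]
    (A : Finset (ι × κ)) :
    Fintype.card ι * ∑ x ∈ A, #{y ∈ A | y.1 ≠ x.1} + #A ^ 2 ≤ Fintype.card ι * #A ^ 2 := by
  set a : ι → ℕ := fun i => #{y ∈ A | y.1 = i}
  have hsplit : ∑ x ∈ A, a x.1 + ∑ x ∈ A, #{y ∈ A | y.1 ≠ x.1} = #A ^ 2 := by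
    simp only [a, ← sum_add_distrib, card_filter_add_card_filter_not, sum_const, smul_eq_mul, sq]
  have hfiber : ∑ x ∈ A, a x.1 = ∑ i, a i ^ 2 := by
    rw [← sum_fiberwise' A Prod.fst a]
    simp only [sum_const, smul_eq_mul, sq, a]
  have hcard : #A = ∑ i, a i := card_eq_sum_card_fiberwise fun _ _ => mem_univ _
  have hcs : #A ^ 2 ≤ Fintype.card ι * ∑ i, a i ^ 2 := hcard ▸ sq_sum_le_card_mul_sum_sq
  nlinarith

namespace K2timesKn

open Finset SimpleGraph

variable {n : ℕ}

lemma adj_iff {x y : Fin 2 × Fin n} : (K2timesKn n).Adj x y ↔ x.1 ≠ y.1 ∧ x.2 ≠ y.2 := Iff.rfl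

instance : DecidableRel (K2timesKn n).Adj := fun _ _ => decidable_of_iff' _ adj_iff

lemma degree_eq (x : Fin 2 × Fin n) : (K2timesKn n).degree x = n - 1 := by
  rw [degree, show (K2timesKn n).neighborFinset x = ({x.1}ᶜ : Finset (Fin 2)) ×ˢ {x.2}ᶜ by
    ext y; simp [adj_iff, eq_comm]]
  simp [card_compl]

lemma sub_one_le_card_neighborFinset_sdiff_add (A : Finset (Fin 2 × Fin n))
    (x : Fin 2 × Fin n) :
    n - 1 ≤ #((K2timesKn n).neighborFinset x \ A) + #{y ∈ A | y.1 ≠ x.1} := by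
  calc n - 1 = #((K2timesKn n).neighborFinset x) := (degree_eq x).symm
    _ ≤ #(((K2timesKn n).neighborFinset x \ A) ∪ {y ∈ A | y.1 ≠ x.1}) := by
      refine card_le_card fun y hy => ?_
      rw [mem_neighborFinset, adj_iff] at hy
      by_cases hyA : y ∈ A
      · exact mem_union_right _ (mem_filter.2 ⟨hyA, hy.1.symm⟩)
      · exact mem_union_left _ (mem_sdiff.2 ⟨(mem_neighborFinset ..).2 hy, hyA⟩)
    _ ≤ _ := card_union_le _ _

lemma two_mul_sub_one_mul_card_le {A : Finset (Fin 2 × Fin n)} {F : Finset (Sym2 (Fin 2 × Fin n))}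
    (hF : cutEdges (K2timesKn n) A ⊆ F) : 2 * (n - 1) * #A ≤ 2 * #F + #A ^ 2 := by
  have hvertex : (n - 1) * #A ≤ #F + ∑ x ∈ A, #{y ∈ A | y.1 ≠ x.1} :=
    calc (n - 1) * #A = ∑ x ∈ A, (n - 1) := by rw [sum_const, smul_eq_mul, mul_comm]
      _ ≤ ∑ x ∈ A, (#((K2timesKn n).neighborFinset x \ A) + #{y ∈ A | y.1 ≠ x.1}) :=
        sum_le_sum fun x _ => sub_one_le_card_neighborFinset_sdiff_add A x
      _ ≤ _ := by
        rw [sum_add_distrib]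
        exact Nat.add_le_add_right ((K2timesKn n).sum_card_neighborFinset_sdiff_le hF) _
  have hpairs := A.card_mul_sum_card_filter_fst_ne_add_sq_le
  rw [Fintype.card_fin] at hpairs
  nlinarith

lemma exists_small_side (hn : 1 ≤ n) {F : Finset (Sym2 (Fin 2 × Fin n))}
    (hF : IsEdgeCut (K2timesKn n) F) :
    ∃ A : Finset (Fin 2 × Fin n), A.Nonempty ∧ #A ≤ n ∧ cutEdges (K2timesKn n) A ⊆ F := by
  have : Nonempty (Fin 2 × Fin n) := ⟨(0, ⟨0, hn⟩)⟩
  obtain ⟨A, hA, hAc, hsub⟩ := (K2timesKn n).exists_cutEdges_subset_of_isEdgeCut hF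
  classical
  set B := A.toFinset
  have hB : (B : Set (Fin 2 × Fin n)) = A := Set.coe_toFinset A
  rcases le_total #B n with h | h
  · exact ⟨B, by rwa [← coe_nonempty, hB], h, by rwa [hB]⟩
  · refine ⟨Bᶜ, by rwa [← coe_nonempty, coe_compl, hB], ?_, by rwa [coe_compl, cutEdges_compl, hB]⟩
    have := card_add_card_compl B
    simp only [Fintype.card_prod, Fintype.card_fin] at this
    omega

lemma sub_one_le_card_of_cutEdges_subset (hn : 4 ≤ n) {A : Finset (Fin 2 × Fin n)}
    {F : Finset (Sym2 (Fin 2 × Fin n))} (hA : A.Nonempty) (hAn : #A ≤ n)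
    (hF : cutEdges (K2timesKn n) A ⊆ F) : n - 1 ≤ #F := by
  have hbound := two_mul_sub_one_mul_card_le hF
  have hA1 := hA.card_pos
  obtain ⟨m, rfl⟩ : ∃ m, n = m + 1 := ⟨n - 1, by omega⟩
  simp only [Nat.add_sub_cancel] at hbound ⊢
  nlinarith

lemma le_card_of_cutEdges_subset (hn : 4 ≤ n) {A : Finset (Fin 2 × Fin n)}
    {F : Finset (Sym2 (Fin 2 × Fin n))} (hA : 2 ≤ #A) (hAn : #A ≤ n)
    (hF : cutEdges (K2timesKn n) A ⊆ F) : n ≤ #F := by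
  have hbound := two_mul_sub_one_mul_card_le hF
  obtain ⟨m, rfl⟩ : ∃ m, n = m + 1 := ⟨n - 1, by omega⟩
  simp only [Nat.add_sub_cancel] at hbound
  nlinarith

lemma edgeConn_eq (hn : 4 ≤ n) : edgeConn (K2timesKn n) = n - 1 := by
  have : Nonempty (Fin n) := ⟨⟨0, by omega⟩⟩
  refine le_antisymm ?_ ((K2timesKn n).le_edgeConn fun F hF => ?_)
  · simpa [degree_eq] using (K2timesKn n).edgeConn_le_degree (0, ⟨0, by omega⟩)
  · obtain ⟨A, hA, hAn, hsub⟩ := exists_small_side (by omega) hF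
    exact sub_one_le_card_of_cutEdges_subset hn hA hAn hsub

end K2timesKn

theorem stmt1 (n : ℕ) (hn : 5 ≤ n) : SuperEdgeConnected (K2timesKn n) := by
  intro F hF hcard
  rw [K2timesKn.edgeConn_eq (by omega)] at hcard
  obtain ⟨A, hA, hAn, hsub⟩ := K2timesKn.exists_small_side (by omega) hF
  have hA1 : A.card = 1 := by
    refine le_antisymm (not_lt.1 fun h => ?_) hA.card_pos
    have := K2timesKn.le_card_of_cutEdges_subset (by omega) h hAn hsub
    omega
  obtain ⟨v, rfl⟩ := Finset.card_eq_one.1 hA1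
  rw [Finset.coe_singleton, SimpleGraph.cutEdges_singleton] at hsub
  exact ⟨v, (K2timesKn n).coe_eq_incidenceSet_of_subset hsub (by rw [hcard, K2timesKn.degree_eq])⟩
end

section
/- For every integer n ≥ 3, the graph K₂ × T_n (equivalently, the complete bipartite graph K_{n,n}) is super restricted edge-connected; that is, every minimum restricted edge-cut isolates an edge. -/
open SimpleGraph

/-!
Isolating the edge `(0,0)(1,0)` by the `2n - 2` edges leaving it is a restricted edge-cut, so
`λ'(K_{n,n}) ≤ 2n - 2`. Conversely, let `F` be a restricted edge-cut with at most `2n - 2` edges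
and suppose every component of `G - F` has at least three vertices. Take a component `A` and a
second component inside its complement; both meet both colour classes. If `A` has `aᵢ` vertices in
class `i` and its complement `bᵢ`, then `F` contains all `a₀b₁ + a₁b₀` edges leaving `A`, and as
`aᵢ, bᵢ ≥ 1` and `a₀ + a₁, b₀ + b₁ ≥ 3` this exceeds `a₀ + a₁ + b₀ + b₁ - 2 = 2n - 2`. Hence a
minimum restricted edge-cut leaves a component with exactly two vertices, which is an edge.
-/

open Finset

lemma Nat.add_add_add_lt_mul_add_mul_add_two {a₀ a₁ b₀ b₁ : ℕ} (ha₀ : 1 ≤ a₀) (ha₁ : 1 ≤ a₁)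
    (hb₀ : 1 ≤ b₀) (hb₁ : 1 ≤ b₁) (ha : 3 ≤ a₀ + a₁) (hb : 3 ≤ b₀ + b₁)
    (hab : a₀ + b₀ = a₁ + b₁) :
    a₀ + a₁ + b₀ + b₁ < a₀ * b₁ + a₁ * b₀ + 2 := by
  rcases Nat.lt_or_ge 1 a₀ with h₀ | h₀ <;> rcases Nat.lt_or_ge 1 b₁ with h₁ | h₁ <;> nlinarith

namespace SimpleGraph

variable {V : Type*} {G : SimpleGraph V}

namespace ConnectedComponent

lemma exists_adj_of_supp_nontrivial {c : G.ConnectedComponent} (hc : c.supp.Nontrivial)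
    {x : V} (hx : x ∈ c.supp) : ∃ y, G.Adj x y := by
  obtain ⟨y, hy, hyx⟩ := hc.exists_ne x
  obtain ⟨w⟩ := c.reachable_of_mem_supp hx hy
  exact ⟨_, w.adj_snd (w.not_nil_of_ne hyx.symm)⟩

lemma supp_nontrivial_of_forall_exists_adj (h : ∀ x, ∃ y, G.Adj x y) (c : G.ConnectedComponent) :
    c.supp.Nontrivial := by
  obtain ⟨x, rfl⟩ := c.exists_rep
  obtain ⟨y, hxy⟩ := h x
  exact ⟨x, rfl, y, (connectedComponentMk_eq_of_adj hxy).symm, hxy.ne⟩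

lemma exists_adj_supp_eq_pair {c : G.ConnectedComponent} (hc : c.supp.ncard = 2) :
    ∃ u v, G.Adj u v ∧ (G.connectedComponentMk u).supp = {u, v} := by
  obtain ⟨u, v, huv, hsupp⟩ := Set.ncard_eq_two.1 hc
  have hu : u ∈ c.supp := hsupp ▸ Set.mem_insert u {v}
  obtain ⟨w, huw⟩ := exists_adj_of_supp_nontrivial (hsupp ▸ Set.nontrivial_pair huv) hu
  have hw : w ∈ ({u, v} : Set V) := hsupp ▸ c.mem_supp_of_adj_mem_supp hu huw
  obtain rfl : w = v := hw.resolve_left huw.ne'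
  exact ⟨u, w, huw, by rw [(c.mem_supp_iff u).1 hu, hsupp]⟩

lemma cutEdges_supp_subset {F : Set (Sym2 V)} (c : (G.deleteEdges F).ConnectedComponent) :
    cutEdges G c.supp ⊆ F := by
  rintro _ ⟨he, x, y, rfl, hx, hy⟩
  by_contra hF
  exact hy (c.mem_supp_of_adj_mem_supp hx ((deleteEdges_adj ..).2 ⟨he, hF⟩))

end ConnectedComponent

lemma deleteEdges_cutEdges_adj {S : Set V} {x y : V} :
    (G.deleteEdges (cutEdges G S)).Adj x y ↔ G.Adj x y ∧ (x ∈ S ↔ y ∈ S) := by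
  simp only [deleteEdges_adj, cutEdges, Set.mem_ofPred_eq, mem_edgeSet]
  grind

lemma Reachable.mem_iff_of_deleteEdges_cutEdges {S : Set V} {x y : V}
    (h : (G.deleteEdges (cutEdges G S)).Reachable x y) : x ∈ S ↔ y ∈ S := by
  obtain ⟨p⟩ := h
  induction p with
  | nil => rfl
  | cons hadj _ ih => exact (deleteEdges_cutEdges_adj.1 hadj).2.trans ih

lemma isRestrictedEdgeCut_cutEdges {S : Set V} {x y : V} (hx : x ∈ S) (hy : y ∉ S)
    (h : ∀ x, ∃ y, G.Adj x y ∧ (x ∈ S ↔ y ∈ S)) : IsRestrictedEdgeCut G (cutEdges G S) :=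
  ⟨fun _ he => he.1,
    fun hconn => hy ((hconn.preconnected x y).mem_iff_of_deleteEdges_cutEdges.1 hx),
    ConnectedComponent.supp_nontrivial_of_forall_exists_adj fun x =>
      (h x).imp fun _ => deleteEdges_cutEdges_adj.2⟩

lemma ncard_cutEdges [Fintype V] [DecidableEq V] [DecidableRel G.Adj] (A : Finset V) :
    (cutEdges G A).ncard = #{p ∈ A ×ˢ Aᶜ | G.Adj p.1 p.2} := by
  have himage : cutEdges G A =
      ({p ∈ A ×ˢ Aᶜ | G.Adj p.1 p.2}.image (fun p => s(p.1, p.2)) : Finset _) := by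
    ext e
    simp only [cutEdges, Set.mem_ofPred_eq, coe_image, coe_filter, Set.mem_image]
    constructor
    · rintro ⟨he, u, v, rfl, hu, hv⟩
      exact ⟨(u, v), by simp_all, rfl⟩
    · rintro ⟨⟨u, v⟩, huv, rfl⟩
      simp only [mem_product, mem_compl] at huv
      exact ⟨huv.2, u, v, rfl, huv.1.1, huv.1.2⟩
  rw [himage, Set.ncard_coe_finset, card_image_of_injOn]
  rintro ⟨u, v⟩ huv ⟨u', v'⟩ huv' h
  simp only [coe_filter, mem_product, mem_compl, Set.mem_ofPred_eq] at huv huv'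
  rcases Sym2.mk_eq_mk_iff.1 h with h | h
  · exact h
  · simp only [Prod.swap_prod_mk, Prod.mk.injEq] at h
    exact absurd (h.2 ▸ huv'.1.1) huv.1.2

end SimpleGraph

section K2timesTn

variable {n : ℕ}

lemma K2timesTn_adj {x y : Fin 2 × Fin n} : (K2timesTn n).Adj x y ↔ x.1 ≠ y.1 := Iff.rfl

instance : DecidableRel (K2timesTn n).Adj := fun _ _ => decidable_of_iff _ K2timesTn_adj.symm

lemma card_filter_fst_eq_zero_add_card_filter_fst_eq_one (A : Finset (Fin 2 × Fin n)) :
    #{x ∈ A | x.1 = 0} + #{x ∈ A | x.1 = 1} = #A := by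
  have hone : {x ∈ A | x.1 = 1} = {x ∈ A | ¬x.1 = 0} := filter_congr fun x _ => by omega
  rw [hone, card_filter_add_card_filter_not]

lemma card_filter_fst_eq_add_card_compl_filter_fst_eq (A : Finset (Fin 2 × Fin n)) (i : Fin 2) :
    #{x ∈ A | x.1 = i} + #{x ∈ Aᶜ | x.1 = i} = n := by
  rw [← card_union_of_disjoint (disjoint_filter_filter disjoint_compl_right), ← filter_union,
    union_compl]
  have : ({x | x.1 = i} : Finset (Fin 2 × Fin n)) = {i} ×ˢ univ := by ext ⟨j, k⟩; simp [eq_comm]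
  simp [this]

lemma ncard_cutEdges_K2timesTn (A : Finset (Fin 2 × Fin n)) :
    (cutEdges (K2timesTn n) A).ncard =
      #{x ∈ A | x.1 = 0} * #{x ∈ Aᶜ | x.1 = 1} + #{x ∈ A | x.1 = 1} * #{x ∈ Aᶜ | x.1 = 0} := by
  rw [ncard_cutEdges, ← card_product, ← card_product, ← card_union_of_disjoint]
  · congr 1 with ⟨x, y⟩
    simp only [K2timesTn_adj, mem_filter, mem_product, mem_union]
    have : x.1 ≠ y.1 ↔ x.1 = 0 ∧ y.1 = 1 ∨ x.1 = 1 ∧ y.1 = 0 := by omega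
    tauto
  · rw [Finset.disjoint_left]
    simp only [mem_product, mem_filter]
    omega

lemma SimpleGraph.ConnectedComponent.exists_mem_supp_fst_eq {G : SimpleGraph (Fin 2 × Fin n)}
    (hG : G ≤ K2timesTn n) {c : G.ConnectedComponent} (hc : c.supp.Nontrivial) (i : Fin 2) :
    ∃ x ∈ c.supp, x.1 = i := by
  obtain ⟨x, hx⟩ := c.nonempty_supp
  obtain ⟨y, hxy⟩ := c.exists_adj_of_supp_nontrivial hc hx
  have hxy₁ : x.1 ≠ y.1 := hG hxy
  rcases (by omega : i = x.1 ∨ i = y.1) with rfl | rfl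
  · exact ⟨x, hx, rfl⟩
  · exact ⟨y, c.mem_supp_of_adj_mem_supp hx hxy, rfl⟩

lemma two_mul_sub_two_lt_ncard_cutEdges_K2timesTn {A : Finset (Fin 2 × Fin n)}
    (hA : ∀ i, ∃ x ∈ A, x.1 = i) (hAc : ∀ i, ∃ x ∈ Aᶜ, x.1 = i) (hA3 : 3 ≤ #A) (hAc3 : 3 ≤ #Aᶜ) :
    2 * n - 2 < (cutEdges (K2timesTn n) A).ncard := by
  have hpos (B : Finset (Fin 2 × Fin n)) (hB : ∀ i, ∃ x ∈ B, x.1 = i) (i : Fin 2) :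
      1 ≤ #{x ∈ B | x.1 = i} := by
    obtain ⟨x, hx, rfl⟩ := hB i
    exact card_pos.2 ⟨x, mem_filter.2 ⟨hx, rfl⟩⟩
  have hA₀ := card_filter_fst_eq_add_card_compl_filter_fst_eq A 0
  have hA₁ := card_filter_fst_eq_add_card_compl_filter_fst_eq A 1
  have hA₀₁ := card_filter_fst_eq_zero_add_card_filter_fst_eq_one A
  have hAc₀₁ := card_filter_fst_eq_zero_add_card_filter_fst_eq_one Aᶜ
  have := Nat.add_add_add_lt_mul_add_mul_add_two (hpos A hA 0) (hpos A hA 1) (hpos _ hAc 0)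
    (hpos _ hAc 1) (by omega) (by omega) (by omega)
  rw [ncard_cutEdges_K2timesTn]
  omega

lemma restrictedEdgeConn_K2timesTn_le (hn : 2 ≤ n) :
    restrictedEdgeConn (K2timesTn n) ≤ (2 * n - 2 : ℕ) := by
  -- `S` is the vertex set `{(0,0), (1,0)}` of the edge to be isolated.
  set S : Finset (Fin 2 × Fin n) := {x | x.2.val = 0}
  have hS (i : Fin 2) : #{x ∈ S | x.1 = i} = 1 :=
    card_eq_one.2 ⟨(i, ⟨0, by omega⟩), by ext ⟨j, k⟩; simp [S, Prod.ext_iff, Fin.ext_iff, and_comm]⟩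
  have hcut : IsRestrictedEdgeCut (K2timesTn n) (cutEdges (K2timesTn n) S) := by
    refine isRestrictedEdgeCut_cutEdges (x := (0, ⟨0, by omega⟩)) (y := (0, ⟨1, by omega⟩))
      (by simp [S]) (by simp [S]) fun x => ⟨(x.1 + 1, x.2), ?_, by simp [S]⟩
    rw [K2timesTn_adj]
    dsimp only
    omega
  have hSc (i : Fin 2) : #{x ∈ Sᶜ | x.1 = i} = n - 1 := by
    have := card_filter_fst_eq_add_card_compl_filter_fst_eq S i
    rw [hS] at this
    omega
  have hfin := Set.toFinite (cutEdges (K2timesTn n) S)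
  refine sInf_le ⟨hfin.toFinset, by rwa [hfin.coe_toFinset], ?_⟩
  rw [← Set.ncard_eq_toFinset_card _ hfin, ncard_cutEdges_K2timesTn, hS, hS, hSc, hSc]
  norm_cast
  omega

lemma exists_ncard_supp_eq_two_of_isRestrictedEdgeCut (hn : n ≠ 0)
    {F : Finset (Sym2 (Fin 2 × Fin n))}
    (hF : IsRestrictedEdgeCut (K2timesTn n) F) (hFcard : #F ≤ 2 * n - 2) :
    ∃ c : ((K2timesTn n).deleteEdges F).ConnectedComponent, c.supp.ncard = 2 := by
  classical
  obtain ⟨-, hdisconn, hnontriv⟩ := hF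
  by_contra! hne
  have h3 (c : ((K2timesTn n).deleteEdges F).ConnectedComponent) : 3 ≤ c.supp.ncard := by
    have := Set.one_lt_ncard_iff_nontrivial.2 (hnontriv c)
    have := hne c
    omega
  obtain ⟨x, y, hxy⟩ : ∃ x y, ¬((K2timesTn n).deleteEdges F).Reachable x y := by
    have : Nonempty (Fin 2 × Fin n) := ⟨(0, ⟨0, Nat.pos_of_ne_zero hn⟩)⟩
    by_contra! hpre
    exact hdisconn ⟨hpre⟩
  set c : ((K2timesTn n).deleteEdges F).ConnectedComponent := connectedComponentMk _ x
  set d : ((K2timesTn n).deleteEdges F).ConnectedComponent := connectedComponentMk _ y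
  set A := c.supp.toFinset
  have hdA : d.supp ⊆ ↑Aᶜ := by
    intro z hzd
    simp only [A, coe_compl, Set.coe_toFinset, Set.mem_compl_iff]
    exact fun hzc => hxy (ConnectedComponent.exact (c.eq_of_common_vertex hzc hzd))
  have hcut : (cutEdges (K2timesTn n) A).ncard ≤ #F := by
    rw [Set.coe_toFinset, ← Set.ncard_coe_finset F]
    exact Set.ncard_le_ncard c.cutEdges_supp_subset F.finite_toSet
  have hlt := two_mul_sub_two_lt_ncard_cutEdges_K2timesTn (A := A)
    (fun i => by simpa [A] using c.exists_mem_supp_fst_eq (deleteEdges_le _) (hnontriv c) i)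
    (fun i => (d.exists_mem_supp_fst_eq (deleteEdges_le _) (hnontriv d) i).imp
      fun _ h => ⟨hdA h.1, h.2⟩)
    (by rw [← Set.ncard_eq_toFinset_card']; exact h3 c)
    (by rw [← Set.ncard_coe_finset]; exact (h3 d).trans (Set.ncard_le_ncard hdA))
  omega

end K2timesTn

theorem stmt7 (n : ℕ) (hn : 3 ≤ n) : SuperRestrictedEdgeConnected (K2timesTn n) := by
  intro F hF hmin
  have hFcard : #F ≤ 2 * n - 2 := by
    have := hmin ▸ restrictedEdgeConn_K2timesTn_le (n := n) (by omega)
    exact_mod_cast this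
  obtain ⟨c, hc⟩ := exists_ncard_supp_eq_two_of_isRestrictedEdgeCut (by omega) hF hFcard
  exact c.exists_adj_supp_eq_pair hc
end
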